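/- arXiv:1805.05793 — 6 statements merged into one kernel-verified Lean document; each statement's English description precedes it below -/
import Mathlib

section
/- Let {M_j} be a finite collection of Hermitian n×n matrices such that no real linear combination of the M_j is positive definite on a nontrivial subspace V ⊆ ℂⁿ. Suppose Σ_j a^j M_j is positive semi-definite on V for some real numbers a^j, with kernel K ⊆ V nontrivial and proper in V. Then no real linear combination of the M_j is positive definite on K. -/
open Matrix

/-- Positive definite on a subspace `V ⊆ ℂⁿ`. -/
def PosDefOn {n : ℕ} (M : Matrix (Fin n) (Fin n) ℂ)
    (V : Submodule ℂ (Fin n → ℂ)) : Prop :=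
  ∀ v ∈ V, v ≠ 0 → 0 < (star v ⬝ᵥ (M *ᵥ v)).re

/-- Positive semi-definite on a subspace `V ⊆ ℂⁿ`. -/
def PosSemidefOn {n : ℕ} (M : Matrix (Fin n) (Fin n) ℂ)
    (V : Submodule ℂ (Fin n → ℂ)) : Prop :=
  ∀ v ∈ V, 0 ≤ (star v ⬝ᵥ (M *ᵥ v)).re

private lemma quad_continuous {n : ℕ} (M : Matrix (Fin n) (Fin n) ℂ) :
    Continuous fun v : Fin n → ℂ => (star v ⬝ᵥ (M *ᵥ v)).re := by
  simp only [dotProduct, mulVec]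
  fun_prop

private lemma quad_smul {n : ℕ} (M : Matrix (Fin n) (Fin n) ℂ) (c : ℂ) (v : Fin n → ℂ) :
    star (c • v) ⬝ᵥ (M *ᵥ (c • v)) = star c * c * (star v ⬝ᵥ (M *ᵥ v)) := by
  rw [star_smul, mulVec_smul, smul_dotProduct, dotProduct_smul]
  simp [smul_smul, mul_assoc]

private lemma quad_real_smul {n : ℕ} (M : Matrix (Fin n) (Fin n) ℂ) (c : ℝ) (v : Fin n → ℂ) :
    (star ((c:ℂ) • v) ⬝ᵥ (M *ᵥ ((c:ℂ) • v))).re = c^2 * (star v ⬝ᵥ (M *ᵥ v)).re := by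
  rw [quad_smul]
  simp only [Complex.star_def, Complex.conj_ofReal, ← Complex.ofReal_mul,
    Complex.re_ofReal_mul]
  ring

private lemma herm_symm {n : ℕ} {M : Matrix (Fin n) (Fin n) ℂ} (hM : M.IsHermitian)
    (v w : Fin n → ℂ) : star v ⬝ᵥ (M *ᵥ w) = star (star w ⬝ᵥ (M *ᵥ v)) := by
  rw [star_dotProduct, star_mulVec, hM.eq, dotProduct_mulVec]

private lemma herm_sum {n m : ℕ} (M : Fin m → Matrix (Fin n) (Fin n) ℂ)
    (hM : ∀ j, (M j).IsHermitian) (a : Fin m → ℝ) : (∑ j, a j • M j).IsHermitian := by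
  unfold Matrix.IsHermitian
  rw [conjTranspose_sum]
  refine Finset.sum_congr rfl fun j _ => ?_
  rw [conjTranspose_smul, (hM j).eq]
  simp

private lemma mem_ker_of_quad_eq_zero {n : ℕ} {A : Matrix (Fin n) (Fin n) ℂ}
    (hA : A.IsHermitian) {V : Submodule ℂ (Fin n → ℂ)} (hpsd : PosSemidefOn A V)
    {v : Fin n → ℂ} (hv : v ∈ V) (h0 : (star v ⬝ᵥ (A *ᵥ v)).re = 0) :
    ∀ w ∈ V, star w ⬝ᵥ (A *ᵥ v) = 0 := by
  have key : ∀ w ∈ V, (star w ⬝ᵥ (A *ᵥ v)).re = 0 := by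
    intro w hw
    set r := (star w ⬝ᵥ (A *ᵥ v)).re with hr
    set c := (star w ⬝ᵥ (A *ᵥ w)).re with hc
    have hc0 : 0 ≤ c := hpsd w hw
    by_contra hr0
    have expand : ∀ t : ℝ, 0 ≤ 2 * t * r + (t * t) * c := by
      intro t
      have hmem : v + (t:ℂ) • w ∈ V := V.add_mem hv (V.smul_mem _ hw)
      have hq := hpsd _ hmem
      have e1 : star (v + (t:ℂ) • w) ⬝ᵥ (A *ᵥ (v + (t:ℂ) • w))
          = star v ⬝ᵥ (A *ᵥ v) + (t:ℂ) * (star v ⬝ᵥ (A *ᵥ w))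
            + (t:ℂ) * (star w ⬝ᵥ (A *ᵥ v)) + ((t * t : ℝ) : ℂ) * (star w ⬝ᵥ (A *ᵥ w)) := by
        simp only [star_add, star_smul, mulVec_add, mulVec_smul, add_dotProduct,
          dotProduct_add, smul_dotProduct, dotProduct_smul, smul_eq_mul, Complex.star_def,
          Complex.conj_ofReal, smul_smul]
        push_cast
        ring
      have hsym : (star v ⬝ᵥ (A *ᵥ w)).re = r := by
        rw [herm_symm hA v w]
        simp [hr]
      rw [e1] at hq
      simp only [Complex.add_re, Complex.re_ofReal_mul, h0, hsym, ← hr, ← hc] at hq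
      linarith
    rcases eq_or_lt_of_le hc0 with hc' | hc'
    · have h := expand (-r)
      rw [← hc'] at h
      nlinarith [mul_self_pos.2 hr0]
    · have h := expand (-r / c)
      have e2 : 2 * (-r / c) * r + (-r / c * (-r / c)) * c = -(r * r) / c := by
        field_simp
        ring
      rw [e2] at h
      have h2 : 0 ≤ -(r * r) / c * c := mul_nonneg h hc'.le
      have h3 : -(r * r) / c * c = -(r * r) := by field_simp
      rw [h3] at h2
      nlinarith [mul_self_pos.2 hr0]
  intro w hw
  have h1 : (star w ⬝ᵥ (A *ᵥ v)).re = 0 := key w hw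
  have h2 : (star (Complex.I • w) ⬝ᵥ (A *ᵥ v)).re = 0 := key _ (V.smul_mem _ hw)
  rw [star_smul, smul_dotProduct] at h2
  simp only [Complex.star_def, Complex.conj_I, smul_eq_mul, Complex.neg_re,
    Complex.mul_re, Complex.I_re, Complex.I_im, zero_mul, one_mul, zero_sub, neg_neg] at h2
  have h2' : (star w ⬝ᵥ (A *ᵥ v)).im = 0 := by
    simpa using h2
  apply Complex.ext <;> simp [h1, h2']

/-- Lemma 4.1 (semi-definite direction): if no real linear combination of the
Hermitian matrices `M j` is positive definite on a nontrivial subspace `V`, and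
`∑ a j • M j` is positive semi-definite on `V` with nontrivial proper kernel `K`
in `V`, then no real linear combination of the `M j` is positive definite on `K`. -/
theorem indefinite_on_kernel {n m : ℕ} (M : Fin m → Matrix (Fin n) (Fin n) ℂ)
    (hM : ∀ j, (M j).IsHermitian) (V K : Submodule ℂ (Fin n → ℂ)) (hV : V ≠ ⊥)
    (hindef : ¬ ∃ a : Fin m → ℝ, PosDefOn (∑ j, a j • M j) V)
    (a : Fin m → ℝ) (hpsd : PosSemidefOn (∑ j, a j • M j) V)
    (hK : ∀ v, v ∈ K ↔ v ∈ V ∧ ∀ w ∈ V, star w ⬝ᵥ ((∑ j, a j • M j) *ᵥ v) = 0)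
    (hKnt : K ≠ ⊥) (hKV : K < V) :
    ¬ ∃ b : Fin m → ℝ, PosDefOn (∑ j, b j • M j) K := by
  rintro ⟨b, hb⟩
  apply hindef
  set A := ∑ j, a j • M j with hAdef
  set B := ∑ j, b j • M j with hBdef
  have hAH : A.IsHermitian := herm_sum M hM a
  set qA := fun v : Fin n → ℂ => (star v ⬝ᵥ (A *ᵥ v)).re with hqAdef
  set qB := fun v : Fin n → ℂ => (star v ⬝ᵥ (B *ᵥ v)).re with hqBdef
  have hqAc : Continuous qA := quad_continuous A
  have hqBc : Continuous qB := quad_continuous B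
  have hVclosed : IsClosed (V : Set (Fin n → ℂ)) := Submodule.closed_of_finiteDimensional V
  set S : Set (Fin n → ℂ) := {v | v ∈ V ∧ ‖v‖ = 1} with hSdef
  have hSeq : S = (V : Set (Fin n → ℂ)) ∩ Metric.sphere 0 1 := by
    ext v
    simp [hSdef, Metric.mem_sphere, dist_zero_right]
  have hSclosed : IsClosed S := by
    rw [hSeq]
    exact hVclosed.inter Metric.isClosed_sphere
  have hScomp : IsCompact S := by
    refine Metric.isCompact_of_isClosed_isBounded hSclosed ?_
    rw [hSeq]
    exact (Metric.isBounded_sphere).subset Set.inter_subset_right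
  -- positivity of qA on the part of S where qB ≤ 0
  have hposT : ∀ v ∈ S, qB v ≤ 0 → 0 < qA v := by
    rintro v ⟨hvV, hv1⟩ hqBv
    have hv0 : v ≠ 0 := by
      intro h
      rw [h] at hv1
      simp at hv1
    rcases (hpsd v hvV).lt_or_eq with h | h
    · exact h
    · exfalso
      have hker : v ∈ K := (hK v).2 ⟨hvV, mem_ker_of_quad_eq_zero hAH hpsd hvV h.symm⟩
      have := hb v hker hv0
      have hqBpos : 0 < qB v := this
      linarith
  -- find a uniform ε
  obtain ⟨ε, hε0, hεall⟩ : ∃ ε > 0, ∀ v ∈ S, 0 < qA v + ε * qB v := by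
    set T : Set (Fin n → ℂ) := {v ∈ S | qB v ≤ 0} with hTdef
    by_cases hT : T.Nonempty
    · have hTclosed : IsClosed T := by
        have hTeq : T = S ∩ qB ⁻¹' (Set.Iic 0) := rfl
        rw [hTeq]
        exact hSclosed.inter (isClosed_Iic.preimage hqBc)
      have hTcomp : IsCompact T := hScomp.of_isClosed_subset hTclosed (fun v hv => hv.1)
      obtain ⟨v0, hv0T, hv0min⟩ := hTcomp.exists_isMinOn hT hqAc.continuousOn
      obtain ⟨w0, hw0S, hw0min⟩ := hScomp.exists_isMinOn ⟨_, hT.choose_spec.1⟩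
        hqBc.continuousOn
      set α := qA v0 with hα
      set β := qB w0 with hβ
      have hα0 : 0 < α := hposT v0 hv0T.1 hv0T.2
      refine ⟨α / (2 * (1 + |β|)), by positivity, fun v hvS => ?_⟩
      set ε := α / (2 * (1 + |β|)) with hεdef
      have hεpos : 0 < ε := by positivity
      rcases le_or_gt (qB v) 0 with hB0 | hB0
      · have hvT : v ∈ T := ⟨hvS, hB0⟩
        have h1 : α ≤ qA v := hv0min hvT
        have h2 : β ≤ qB v := hw0min hvS
        have h3 : -|β| ≤ β := neg_abs_le β
        have h4 : ε * (1 + |β|) = α / 2 := by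
          rw [hεdef]
          field_simp
        nlinarith [abs_nonneg β, mul_le_mul_of_nonneg_left h2 hεpos.le,
          mul_le_mul_of_nonneg_left h3 hεpos.le]
      · have h1 : 0 ≤ qA v := hpsd v hvS.1
        nlinarith
    · refine ⟨1, one_pos, fun v hvS => ?_⟩
      have hB0 : 0 < qB v := by
        by_contra h
        exact hT ⟨v, hvS, not_lt.1 h⟩
      have h1 : 0 ≤ qA v := hpsd v hvS.1
      linarith
  -- assemble the positive-definite combination
  refine ⟨fun j => a j + ε * b j, ?_⟩
  have hsum : ∑ j, (a j + ε * b j) • M j = A + ε • B := by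
    rw [hAdef, hBdef, Finset.smul_sum, ← Finset.sum_add_distrib]
    refine Finset.sum_congr rfl fun j _ => ?_
    rw [add_smul, smul_smul]
  rw [hsum]
  intro v hvV hv0
  have hnv : (0:ℝ) < ‖v‖ := norm_pos_iff.2 hv0
  set c : ℝ := ‖v‖⁻¹ with hcdef
  have hc0 : 0 < c := inv_pos.2 hnv
  set u := (c:ℂ) • v with hudef
  have huV : u ∈ V := V.smul_mem _ hvV
  have hu1 : ‖u‖ = 1 := by
    rw [hudef, norm_smul]
    simp [hcdef, abs_of_pos hc0, inv_mul_cancel₀ (ne_of_gt hnv)]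
  have huS : u ∈ S := ⟨huV, hu1⟩
  have hqu := hεall u huS
  -- expand q_{A+εB}(v) in terms of qA and qB
  have hsplit : ∀ x : Fin n → ℂ, (star x ⬝ᵥ ((A + ε • B) *ᵥ x)).re
      = qA x + ε * qB x := by
    intro x
    have hεB : ε • B = ((ε:ℂ)) • B := by
      rw [← algebraMap_smul ℂ ε B]
      norm_num
    rw [hεB, add_mulVec, smul_mulVec, dotProduct_add, dotProduct_smul,
      smul_eq_mul]
    simp [Complex.add_re, Complex.re_ofReal_mul, hqAdef, hqBdef]
  rw [hsplit v]
  have hu : (star u ⬝ᵥ ((A + ε • B) *ᵥ u)).re = c^2 * ((star v ⬝ᵥ ((A + ε • B) *ᵥ v)).re) :=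
    quad_real_smul _ c v
  rw [hsplit u, hsplit v] at hu
  have hquA : qA u = c^2 * qA v := by
    have := quad_real_smul A c v
    simpa [hqAdef, hudef] using this
  have hquB : qB u = c^2 * qB v := by
    have := quad_real_smul B c v
    simpa [hqBdef, hudef] using this
  rw [hquA, hquB] at hqu
  nlinarith [sq_nonneg c, hc0]
end

section
/- Let {M_j} be a finite collection of Hermitian n×n matrices and V ⊆ ℂⁿ a nontrivial subspace. If no real linear combination of the M_j is positive definite when restricted to V, then there exists a nonzero positive semi-definite Hermitian n×n matrix N with range contained in V such that Tr(M_j N) = 0 for all j. -/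
open Matrix
open scoped ComplexOrder

/-!
Send a vector `v` to the vector of its Hermitian forms `(v* M_j v)_j ∈ ℝᵐ`, and let `K` be the
image of the unit sphere of `V`; it is compact, hence so is its convex hull (Carathéodory).
If `0 = ∑ wᵢ (vᵢ* M_j vᵢ)_j` is a convex combination of points of `K`, then
`N = ∑ wᵢ vᵢ vᵢ*` is the required matrix, since `Tr (M_j vᵢ vᵢ*) = vᵢ* M_j vᵢ`. Otherwise a
hyperplane `a · x = 0` strictly separates `0` from the hull, and `∑ a_j M_j` is positive definite
on `V`.
-/

open Set Module

section CompactConvexHull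

variable {E : Type*} [AddCommGroup E] [Module ℝ E] [FiniteDimensional ℝ E]

theorem convexHull_eq_iUnion_image_stdSimplex (K : Set E) :
    convexHull ℝ K = ⋃ k : Fin (finrank ℝ E + 2),
      (fun p : (Fin k → ℝ) × (Fin k → E) => ∑ i, p.1 i • p.2 i) ''
        (stdSimplex ℝ (Fin k) ×ˢ univ.pi fun _ => K) := by
  refine Subset.antisymm (fun x hx => ?_) (iUnion_subset fun k => ?_)
  · obtain ⟨ι, _, z, w, hzK, hz, hw0, hw1, rfl⟩ := eq_pos_convex_span_of_mem_convexHull hx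
    have hcard : Fintype.card ι < finrank ℝ E + 2 := by
      have := Submodule.finrank_le (vectorSpan ℝ (range z))
      have := hz.card_le_finrank_succ
      omega
    let e := Fintype.equivFin ι
    refine mem_iUnion.2 ⟨⟨_, hcard⟩, (w ∘ e.symm, z ∘ e.symm), ⟨⟨fun i => (hw0 _).le, ?_⟩,
      fun i _ => hzK (mem_range_self _)⟩, ?_⟩
    · simpa [← hw1] using e.symm.sum_comp w
    · exact e.symm.sum_comp fun i => w i • z i
  · rintro _ ⟨⟨w, z⟩, ⟨hw, hz⟩, rfl⟩
    exact (convex_convexHull ℝ K).sum_mem (fun i _ => hw.1 i) hw.2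
      fun i _ => subset_convexHull ℝ K (hz i (mem_univ i))

variable [TopologicalSpace E] [ContinuousAdd E] [ContinuousSMul ℝ E]

theorem IsCompact.convexHull {K : Set E} (hK : IsCompact K) : IsCompact (convexHull ℝ K) := by
  rw [convexHull_eq_iUnion_image_stdSimplex]
  exact isCompact_iUnion fun k =>
    ((isCompact_stdSimplex _ _).prod (isCompact_univ_pi fun _ => hK)).image (by fun_prop)

end CompactConvexHull

theorem exists_forall_dotProduct_pos_of_zero_notMem_convexHull {ι : Type*} [Fintype ι]
    {K : Set (ι → ℝ)} (hK : IsCompact K) (h0 : (0 : ι → ℝ) ∉ convexHull ℝ K) :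
    ∃ a : ι → ℝ, ∀ x ∈ K, 0 < a ⬝ᵥ x := by
  classical
  obtain ⟨f, u, hf0, hfK⟩ :=
    geometric_hahn_banach_point_closed (convex_convexHull ℝ K) hK.convexHull.isClosed h0
  refine ⟨fun i => f fun j => if i = j then 1 else 0, fun x hx => ?_⟩
  have hf : f x = x ⬝ᵥ fun i => f fun j => if i = j then 1 else 0 :=
    f.toLinearMap.pi_apply_eq_sum_univ x
  rw [dotProduct_comm, ← hf]
  exact (map_zero f ▸ hf0).trans (hfK x (subset_convexHull ℝ K hx))

section HermitianForms

variable {ι n : Type*} [Fintype n]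

def quadForms (M : ι → Matrix n n ℂ) (v : n → ℂ) : ι → ℝ :=
  fun i => (star v ⬝ᵥ (M i *ᵥ v)).re

theorem continuous_quadForms (M : ι → Matrix n n ℂ) : Continuous (quadForms M) :=
  continuous_pi fun _ => Complex.continuous_re.comp <|
    continuous_star.dotProduct (continuous_const.matrix_mulVec continuous_id)

theorem quadForms_ofReal_smul (M : ι → Matrix n n ℂ) (c : ℝ) (v : n → ℂ) :
    quadForms M ((c : ℂ) • v) = c ^ 2 • quadForms M v := by
  ext j
  simp only [quadForms, star_smul, mulVec_smul, smul_dotProduct, dotProduct_smul,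
    Complex.star_def, Complex.conj_ofReal, smul_eq_mul, Complex.re_ofReal_mul, Pi.smul_apply]
  ring

theorem re_star_dotProduct_sum_smul_mulVec [Fintype ι] (M : ι → Matrix n n ℂ) (a : ι → ℝ)
    (v : n → ℂ) : (star v ⬝ᵥ ((∑ j, a j • M j) *ᵥ v)).re = a ⬝ᵥ quadForms M v := by
  rw [sum_mulVec, dotProduct_sum, Complex.re_sum]
  refine Finset.sum_congr rfl fun j _ => ?_
  rw [smul_mulVec, dotProduct_smul, Complex.smul_re, smul_eq_mul]
  rfl

theorem Matrix.IsHermitian.trace_mul_vecMulVec_self {A : Matrix n n ℂ} (hA : A.IsHermitian)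
    (v : n → ℂ) : (A * vecMulVec v (star v)).trace = (star v ⬝ᵥ (A *ᵥ v)).re := by
  rw [mul_vecMulVec, trace_vecMulVec, dotProduct_comm]
  exact Complex.ext rfl (by simpa using hA.im_star_dotProduct_mulVec_self v)

theorem Matrix.IsHermitian.trace_mul_sum_smul_vecMulVec_self {κ : Type*} [Fintype κ]
    {A : Matrix n n ℂ} (hA : A.IsHermitian) (w : κ → ℝ) (v : κ → n → ℂ) :
    (A * ∑ i, (w i : ℂ) • vecMulVec (v i) (star (v i))).trace =
      ↑(∑ i, w i * (star (v i) ⬝ᵥ (A *ᵥ v i)).re) := by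
  simp only [Finset.mul_sum, mul_smul_comm, trace_sum, trace_smul,
    hA.trace_mul_vecMulVec_self, smul_eq_mul, Complex.ofReal_sum, Complex.ofReal_mul]

theorem exists_posSemidef_of_zero_mem_convexHull [Fintype ι] {M : ι → Matrix n n ℂ}
    (hM : ∀ j, (M j).IsHermitian) {V : Submodule ℂ (n → ℂ)}
    (h0 : 0 ∈ convexHull ℝ (quadForms M '' ((V : Set (n → ℂ)) \ {0}))) :
    ∃ N : Matrix n n ℂ, N.PosSemidef ∧ N ≠ 0 ∧
      LinearMap.range N.mulVecLin ≤ V ∧ ∀ j, (M j * N).trace = 0 := by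
  obtain ⟨κ, _, z, w, hzK, -, hw0, hw1, hwz⟩ := eq_pos_convex_span_of_mem_convexHull h0
  choose v hv hvz using fun i => hzK (mem_range_self i)
  set N := ∑ i, (w i : ℂ) • vecMulVec (v i) (star (v i))
  refine ⟨N, ?_, ?_, ?_, fun j => ?_⟩
  · exact posSemidef_sum _ fun i _ =>
      (posSemidef_vecMulVec_self_star _).smul (Complex.zero_le_real.2 (hw0 i).le)
  · have hκ : (Finset.univ : Finset κ).Nonempty :=
      Finset.nonempty_of_sum_ne_zero (hw1 ▸ one_ne_zero)
    have htr : 0 < N.trace.re := by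
      simp only [N, trace_sum, trace_smul, trace_vecMulVec, smul_eq_mul, Complex.re_sum,
        Complex.re_ofReal_mul]
      exact Finset.sum_pos (fun i _ =>
        mul_pos (hw0 i) (Complex.pos_iff.1 (dotProduct_self_star_pos_iff.2 (hv i).2)).1) hκ
    intro hN
    simp [hN] at htr
  · rintro _ ⟨x, rfl⟩
    simp only [N, mulVecLin_apply, sum_mulVec, smul_mulVec, vecMulVec_mulVec, op_smul_eq_smul]
    exact V.sum_mem fun i _ => V.smul_mem _ (V.smul_mem _ (hv i).1)
  · rw [(hM j).trace_mul_sum_smul_vecMulVec_self]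
    have hj := congrFun hwz j
    simp only [← hvz, quadForms, Finset.sum_apply, Pi.smul_apply, smul_eq_mul] at hj
    exact_mod_cast hj

end HermitianForms

theorem posDefOn_sum_smul_of_forall_mem_sphere {ι : Type*} [Fintype ι] {n : ℕ}
    {M : ι → Matrix (Fin n) (Fin n) ℂ} {V : Submodule ℂ (Fin n → ℂ)} {a : ι → ℝ}
    (ha : ∀ v ∈ (V : Set (Fin n → ℂ)) ∩ Metric.sphere 0 1, 0 < a ⬝ᵥ quadForms M v) :
    PosDefOn (∑ j, a j • M j) V := by
  intro v hv hv0
  have hnorm : 0 < ‖v‖ := norm_pos_iff.2 hv0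
  have hu := ha (((‖v‖⁻¹ : ℝ) : ℂ) • v) ⟨V.smul_mem _ hv, by simp [norm_smul, hnorm.ne']⟩
  rw [quadForms_ofReal_smul, dotProduct_smul, smul_eq_mul] at hu
  rw [re_star_dotProduct_sum_smul_mulVec]
  exact pos_of_mul_pos_right hu (by positivity)

theorem indefinite_implies_orthogonal_psd_general {n m : ℕ}
    (M : Fin m → Matrix (Fin n) (Fin n) ℂ) (hM : ∀ j, (M j).IsHermitian)
    (V : Submodule ℂ (Fin n → ℂ))
    (hindef : ¬ ∃ a : Fin m → ℝ, PosDefOn (∑ j, a j • M j) V) :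
    ∃ N : Matrix (Fin n) (Fin n) ℂ, N.PosSemidef ∧ N ≠ 0 ∧
      LinearMap.range N.mulVecLin ≤ V ∧ ∀ j, (M j * N).trace = 0 := by
  set S := (V : Set (Fin n → ℂ)) ∩ Metric.sphere 0 1
  have hS : IsCompact S := (isCompact_sphere 0 1).inter_left V.closed_of_finiteDimensional
  by_cases h0 : (0 : Fin m → ℝ) ∈ convexHull ℝ (quadForms M '' S)
  · refine exists_posSemidef_of_zero_mem_convexHull hM (convexHull_mono (image_mono ?_) h0)
    rintro v ⟨hv, hv1⟩
    exact ⟨hv, ne_zero_of_mem_sphere one_ne_zero ⟨v, hv1⟩⟩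
  · obtain ⟨a, ha⟩ := exists_forall_dotProduct_pos_of_zero_notMem_convexHull
      (hS.image (continuous_quadForms M)) h0
    refine absurd ⟨a, posDefOn_sum_smul_of_forall_mem_sphere fun v hv => ?_⟩ hindef
    exact ha _ (mem_image_of_mem _ hv)

/-- Hard direction of Lemma 4.3: if no real linear combination of the Hermitian
matrices `M_j` is positive definite on the nontrivial subspace `V`, then there
is a nonzero positive semi-definite matrix `N` with range contained in `V` and
`Tr(M_j N) = 0` for all `j`. -/
theorem indefinite_implies_orthogonal_psd {n m : ℕ}
    (M : Fin m → Matrix (Fin n) (Fin n) ℂ) (hM : ∀ j, (M j).IsHermitian)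
    (V : Submodule ℂ (Fin n → ℂ)) (hV : V ≠ ⊥)
    (hindef : ¬ ∃ a : Fin m → ℝ, PosDefOn (∑ j, a j • M j) V) :
    ∃ N : Matrix (Fin n) (Fin n) ℂ, N.PosSemidef ∧ N ≠ 0 ∧
      LinearMap.range N.mulVecLin ≤ V ∧ ∀ j, (M j * N).trace = 0 :=
  indefinite_implies_orthogonal_psd_general M hM V hindef
end

section
/- Let W be a finite-dimensional real inner product space, C ⊆ W the closed convex cone of positive semi-definite Hermitian n×n matrices (with inner product ⟨A,B⟩ = Tr(AB)), and L ⊆ W a linear subspace. Then L contains a positive definite matrix if and only if the orthogonal complement of L contains no nonzero positive semi-definite matrix. -/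
open Matrix
open scoped ComplexOrder

/-!
If `A ∈ L` is positive definite and `N = ∑ᵢ vᵢ vᵢᴴ` is positive semidefinite, then
`Tr(AN) = ∑ᵢ vᵢᴴ A vᵢ` vanishes only if every `vᵢ` does. Conversely, send the compact convex set of
density matrices (positive semidefinite, trace one) into the dual of `L` by
`N ↦ (A ↦ Re Tr(AN))`. If the image contains `0`, the corresponding density matrix is a nonzero
positive semidefinite matrix orthogonal to `L`, because `Tr(AN)` is real for Hermitian `A` and `N`.
Otherwise Hahn–Banach separates `0` from the image; as `L` is finite-dimensional, the separating
functional is evaluation at some `A ∈ L`, and `A` is positive on every `x xᴴ / (xᴴ x)`.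
-/

theorem exists_forall_apply_pos_of_zero_notMem {V : Type*} [AddCommGroup V] [Module ℝ V]
    [TopologicalSpace V] [IsTopologicalAddGroup V] [ContinuousSMul ℝ V] [FiniteDimensional ℝ V]
    [T2Space V] {K : Set (StrongDual ℝ V)} (hconv : Convex ℝ K) (hcomp : IsCompact K)
    (h0 : 0 ∉ K) : ∃ v : V, ∀ φ ∈ K, 0 < φ v := by
  obtain ⟨g, u, hg0, hgK⟩ := geometric_hahn_banach_point_closed hconv hcomp.isClosed h0
  obtain ⟨v, rfl⟩ := (LinearMap.IsContPerfPair.bijective_right (topDualPairing ℝ V)).2 g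
  rw [map_zero] at hg0
  exact ⟨v, fun φ hφ => hg0.trans (hgK φ hφ)⟩

namespace Matrix

open RCLike

variable {ι 𝕜 : Type*} [RCLike 𝕜]

theorem PosSemidef.norm_apply_sq_le {N : Matrix ι ι 𝕜} (hN : N.PosSemidef) (i j : ι) :
    ‖N i j‖ ^ 2 ≤ re (N i i) * re (N j j) := by
  have hdet := (hN.submatrix ![i, j]).det_nonneg
  rw [det_fin_two] at hdet
  simp only [submatrix_apply, cons_val_zero, cons_val_one] at hdet
  rw [← hN.1.coe_re_apply_self i, ← hN.1.coe_re_apply_self j, ← hN.1.apply j i, star_def,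
    mul_conj] at hdet
  rwa [← ofReal_mul, ← ofReal_pow, ← ofReal_sub, ofReal_nonneg, sub_nonneg] at hdet

variable [Fintype ι]

theorem trace_mul_vecMulVec_star {R : Type*} [CommSemiring R] [Star R] (A : Matrix ι ι R)
    (v : ι → R) : (A * vecMulVec v (star v)).trace = star v ⬝ᵥ A *ᵥ v := by
  rw [mul_vecMulVec, trace_vecMulVec, dotProduct_comm]

theorem PosDef.trace_mul_eq_zero_iff {A N : Matrix ι ι 𝕜} (hA : A.PosDef) (hN : N.PosSemidef) :
    (A * N).trace = 0 ↔ N = 0 := by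
  refine ⟨fun h => ?_, fun h => by simp [h]⟩
  obtain ⟨m, v, rfl⟩ := posSemidef_iff_eq_sum_vecMulVec.mp hN
  simp only [Finset.mul_sum, trace_sum, trace_mul_vecMulVec_star] at h
  have hre := congrArg re h
  rw [map_sum, map_zero, Finset.sum_eq_zero_iff_of_nonneg fun i _ =>
    hA.posSemidef.re_dotProduct_nonneg (v i)] at hre
  have hv : ∀ i, v i = 0 := fun i => by
    by_contra hvi
    exact (hA.re_dotProduct_pos hvi).ne' (hre i (Finset.mem_univ i))
  simp [hv]

theorem IsHermitian.im_trace_mul {A B : Matrix ι ι 𝕜} (hA : A.IsHermitian) (hB : B.IsHermitian) :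
    im (A * B).trace = 0 := by
  rw [← conj_eq_iff_im, ← star_def, ← trace_conjTranspose, conjTranspose_mul, hA.eq, hB.eq,
    trace_mul_comm]

theorem PosSemidef.re_apply_self_le_re_trace {N : Matrix ι ι 𝕜} (hN : N.PosSemidef) (i : ι) :
    re (N i i) ≤ re N.trace := by
  rw [trace, map_sum]
  exact Finset.single_le_sum (f := fun k => re (N k k))
    (fun k _ => (nonneg_iff.mp hN.diag_nonneg).1) (Finset.mem_univ i)

theorem isClosed_setOf_posSemidef : IsClosed {N : Matrix ι ι 𝕜 | N.PosSemidef} := by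
  simp only [posSemidef_iff_dotProduct_mulVec, Set.ofPred_and, Set.ofPred_forall]
  exact (isClosed_eq (by fun_prop) continuous_id).inter
    (isClosed_iInter fun x => isClosed_le continuous_const (by fun_prop))

variable (ι 𝕜) in
def densityMatrices : Set (Matrix ι ι 𝕜) := {N | N.PosSemidef ∧ N.trace = 1}

theorem convex_densityMatrices : Convex ℝ (densityMatrices ι 𝕜) := by
  rintro N ⟨hN, htrN⟩ M ⟨hM, htrM⟩ a b ha hb hab
  refine ⟨(hN.smul ha).add (hM.smul hb), ?_⟩
  rw [trace_add, trace_smul, trace_smul, htrN, htrM, ← add_smul, hab, one_smul]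

theorem isCompact_densityMatrices : IsCompact (densityMatrices ι 𝕜) := by
  have hclosed : IsClosed (densityMatrices ι 𝕜) :=
    isClosed_setOf_posSemidef.inter (isClosed_eq (by fun_prop) continuous_const)
  refine (isCompact_univ_pi fun _ => isCompact_univ_pi fun _ => isCompact_closedBall 0 1)
    |>.of_isClosed_subset hclosed ?_
  rintro N ⟨hN, htr⟩ i - j -
  have hdiag : ∀ k, re (N k k) ≤ 1 := fun k => by
    simpa [htr] using hN.re_apply_self_le_re_trace k
  have hsq : ‖N i j‖ ^ 2 ≤ 1 := (hN.norm_apply_sq_le i j).trans <|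
    mul_le_one₀ (hdiag i) (nonneg_iff.mp hN.diag_nonneg).1 (hdiag j)
  simpa using (sq_le_one_iff₀ (norm_nonneg _)).mp hsq

theorem posDef_of_forall_mem_densityMatrices {A : Matrix ι ι 𝕜} (hA : A.IsHermitian)
    (h : ∀ N ∈ densityMatrices ι 𝕜, 0 < re (A * N).trace) : A.PosDef := by
  refine PosDef.of_dotProduct_mulVec_pos hA fun x hx => ?_
  obtain ⟨c, hc, hcx⟩ := pos_iff_exists_ofReal.mp (dotProduct_star_self_pos_iff.mpr hx)
  have hN : c⁻¹ • vecMulVec x (star x) ∈ densityMatrices ι 𝕜 := by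
    refine ⟨(posSemidef_vecMulVec_self_star x).smul (inv_nonneg.mpr hc.le), ?_⟩
    rw [trace_smul, trace_vecMulVec, dotProduct_comm, ← hcx, real_smul_ofReal, ← ofReal_mul,
      inv_mul_cancel₀ hc.ne', ofReal_one]
  have hpos := h _ hN
  rw [mul_smul_comm, trace_smul, trace_mul_vecMulVec_star, smul_re] at hpos
  exact pos_iff.mpr ⟨pos_of_mul_pos_right hpos (inv_nonneg.mpr hc.le),
    hA.im_star_dotProduct_mulVec_self x⟩

noncomputable def reTraceDual (L : Submodule ℝ (Matrix ι ι 𝕜)) :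
    Matrix ι ι 𝕜 →ₗ[ℝ] StrongDual ℝ L :=
  LinearMap.toContinuousLinearMap.toLinearMap ∘ₗ
    (((LinearMap.mul ℝ (Matrix ι ι 𝕜)).compr₂
      (reLm ∘ₗ traceLinearMap ι ℝ 𝕜)).domRestrict L).flip

@[simp] theorem reTraceDual_apply (L : Submodule ℝ (Matrix ι ι 𝕜)) (N : Matrix ι ι 𝕜) (A : L) :
    reTraceDual L N A = re ((A : Matrix ι ι 𝕜) * N).trace :=
  rfl

theorem continuous_reTraceDual (L : Submodule ℝ (Matrix ι ι 𝕜)) : Continuous (reTraceDual L) :=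
  LinearMap.continuous_of_finiteDimensional (F' := StrongDual ℝ L) _

end Matrix

/-- Duality for the PSD cone (the `V = ℂⁿ` case of Lemma 4.3): a real subspace
`L` of Hermitian matrices contains a positive definite matrix if and only if
the orthogonal complement of `L` (with respect to `⟨A,B⟩ = Tr(AB)`) contains
no nonzero positive semi-definite matrix. -/
theorem psd_cone_duality {n : ℕ} (L : Submodule ℝ (Matrix (Fin n) (Fin n) ℂ))
    (hL : ∀ A ∈ L, A.IsHermitian) :
    (∃ A ∈ L, A.PosDef) ↔
      ∀ N : Matrix (Fin n) (Fin n) ℂ, N.PosSemidef →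
        (∀ A ∈ L, (A * N).trace = 0) → N = 0 := by
  refine ⟨fun ⟨A, hAL, hA⟩ N hN hperp => (hA.trace_mul_eq_zero_iff hN).mp (hperp A hAL),
    fun h => ?_⟩
  have h0 : (0 : StrongDual ℝ L) ∉ reTraceDual L '' densityMatrices (Fin n) ℂ := by
    rintro ⟨N, ⟨hN, htr⟩, hN0⟩
    have hperp : ∀ A ∈ L, (A * N).trace = 0 := fun A hA =>
      Complex.ext (by simpa using congr($hN0 ⟨A, hA⟩)) ((hL A hA).im_trace_mul hN.1)
    simp [h N hN hperp] at htr
  obtain ⟨A, hA⟩ := exists_forall_apply_pos_of_zero_notMem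
    (convex_densityMatrices.linear_image _)
    (isCompact_densityMatrices.image (continuous_reTraceDual L)) h0
  exact ⟨A, A.2, posDef_of_forall_mem_densityMatrices (hL A A.2) fun N hN => hA _ ⟨N, hN, rfl⟩⟩
end

section
/- Let N be a positive semi-definite Hermitian n×n matrix, v a unit-length eigenvector of N with eigenvalue λ > 0, and u ∈ ℂⁿ any vector. Then for every t ∈ ℝ, the matrix N + t(u v* + v u*) + (t²/λ) u u* is positive semi-definite. -/
/-!
With `E = v v*`, the eigenvector equation gives `N E = E N = λ E`, so
`N - λ E = (1 - E)* N (1 - E)` is positive semi-definite. Completing the square,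
`N + t (u v* + v u*) + (t² / λ) u u* = (N - λ E) + λ w w*` with `w = v + (t / λ) u`.
-/

open Matrix
open scoped ComplexOrder

namespace Matrix

variable {𝕜 n : Type*} [RCLike 𝕜]

theorem PosSemidef.sub_smul_vecMulVec_of_mulVec_eq [Fintype n] [DecidableEq n]
    {N : Matrix n n 𝕜} (hN : N.PosSemidef) {v : n → 𝕜} (hv : star v ⬝ᵥ v = 1) {l : ℝ}
    (heig : N *ᵥ v = (l : 𝕜) • v) :
    (N - (l : 𝕜) • vecMulVec v (star v)).PosSemidef := by
  set E := vecMulVec v (star v)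
  have hEE : E * E = E := by rw [vecMulVec_mul_vecMulVec, hv, one_smul]
  have hNE : N * E = (l : 𝕜) • E := by rw [mul_vecMulVec, heig, smul_vecMulVec]
  have hEN : E * N = (l : 𝕜) • E := by
    rw [vecMulVec_mul, ← hN.1.eq, ← star_mulVec, heig, star_smul, RCLike.star_def,
      RCLike.conj_ofReal, vecMulVec_smul]
  have hP : (1 - E)ᴴ = 1 - E := by
    rw [conjTranspose_sub, conjTranspose_one, conjTranspose_vecMulVec, star_star]
  have hconj : N - (l : 𝕜) • E = (1 - E)ᴴ * N * (1 - E) := by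
    rw [hP, sub_mul, one_mul, sub_mul, mul_sub, mul_one, hEN, hNE, smul_mul, mul_sub, mul_one,
      hEE, sub_self, smul_zero, sub_zero]
  rw [hconj]
  exact hN.conjTranspose_mul_mul_same _

theorem smul_vecMulVec_add_div_smul_self_star {l : ℝ} (hl : l ≠ 0) (t : ℝ) (u v : n → 𝕜) :
    (l : 𝕜) • vecMulVec (v + ((t / l : ℝ) : 𝕜) • u) (star (v + ((t / l : ℝ) : 𝕜) • u)) =
      (l : 𝕜) • vecMulVec v (star v) + (t : 𝕜) • (vecMulVec u (star v) + vecMulVec v (star u))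
        + ((t ^ 2 / l : ℝ) : 𝕜) • vecMulVec u (star u) := by
  rw [star_add, star_smul, RCLike.star_def, RCLike.conj_ofReal]
  simp only [add_vecMulVec, vecMulVec_add, smul_vecMulVec, vecMulVec_smul, smul_add, smul_smul]
  have hl' : (l : 𝕜) ≠ 0 := RCLike.ofReal_ne_zero.mpr hl
  match_scalars <;> field_simp

end Matrix

/-- If `N` is positive semi-definite, `v` is a unit eigenvector of `N` with
eigenvalue `λ > 0`, and `u ∈ ℂⁿ`, then `N + t(uv* + vu*) + (t²/λ) uu*` is
positive semi-definite for every real `t`. -/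
theorem psd_rank_one_perturbation {n : ℕ} (N : Matrix (Fin n) (Fin n) ℂ)
    (hN : N.PosSemidef) (v : Fin n → ℂ) (hv : star v ⬝ᵥ v = 1) (l : ℝ)
    (hl : 0 < l) (heig : N *ᵥ v = (l : ℂ) • v) (u : Fin n → ℂ) (t : ℝ) :
    (N + (t : ℂ) • (vecMulVec u (star v) + vecMulVec v (star u))
        + ((t ^ 2 / l : ℝ) : ℂ) • vecMulVec u (star u)).PosSemidef := by
  have hsplit : N + (t : ℂ) • (vecMulVec u (star v) + vecMulVec v (star u))
      + ((t ^ 2 / l : ℝ) : ℂ) • vecMulVec u (star u)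
      = (N - (l : ℂ) • vecMulVec v (star v))
        + (l : ℂ) • vecMulVec (v + ((t / l : ℝ) : ℂ) • u) (star (v + ((t / l : ℝ) : ℂ) • u)) := by
    have hsq := smul_vecMulVec_add_div_smul_self_star (𝕜 := ℂ) hl.ne' t u v
    rw [RCLike.ofReal_eq_complex_ofReal] at hsq
    rw [hsq]
    abel
  rw [hsplit]
  exact (hN.sub_smul_vecMulVec_of_mulVec_eq hv heig).add
    ((posSemidef_vecMulVec_self_star _).smul (Complex.zero_le_real.mpr hl.le))
end

section
/- Let N₁ be a nonzero positive semi-definite Hermitian n×n matrix and N₃ a nonzero positive semi-definite Hermitian matrix with Ran(N₃) ⊆ Ran(N₁), with N₁ and N₃ linearly independent. Define λ̃ = inf{λ ∈ ℝ : λN₁ − N₃ is positive semi-definite}. Then λ̃ is a finite positive real number, λ̃N₁ − N₃ is positive semi-definite and nonzero, and Ran(N₃) is not contained in Ran(λ̃N₁ − N₃). -/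
/-!
Since `Ran N₃ ⊆ Ran N₁`, the kernel of `N₁` lies in that of `N₃`; writing `N₁ = D⋆D` and
`N₃ = C⋆C`, this lets `C` factor as `C = E D`, whence `N₃ = D⋆(E⋆E)D ≤ ‖E⋆E‖ • D⋆D` in the
C⋆-algebra of matrices. So the set `{λ | λN₁ − N₃ ⪰ 0}` is nonempty; it is closed, and every
member is positive because `N₃ ≠ 0`, so `λ̃` belongs to it and is positive. If
`Ran N₃ ⊆ Ran (λ̃N₁ − N₃)`, the same argument gives `μ > 0` with `μ(λ̃N₁ − N₃) − N₃ ⪰ 0`,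
i.e. `μλ̃/(μ+1)` lies in the set, contradicting minimality.
-/

open Matrix
open scoped ComplexOrder

theorem LinearMap.exists_comp_eq_of_ker_le {K V W U : Type*} [DivisionRing K]
    [AddCommGroup V] [Module K V] [AddCommGroup W] [Module K W] [AddCommGroup U] [Module K U]
    {f : V →ₗ[K] W} {g : V →ₗ[K] U} (h : ker f ≤ ker g) : ∃ e : W →ₗ[K] U, e ∘ₗ f = g := by
  obtain ⟨r, hr⟩ := ((ker f).liftQ f le_rfl).exists_leftInverse_of_injective
    (Submodule.ker_liftQ_eq_bot _ _ _ le_rfl)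
  refine ⟨(ker f).liftQ g h ∘ₗ r, LinearMap.ext fun x => ?_⟩
  have hx : r (f x) = Submodule.Quotient.mk x := by
    simpa using congr($hr (Submodule.Quotient.mk x))
  simp [hx]

theorem Matrix.exists_eq_mul_of_ker_le {K m n p : Type*} [Field K] [Fintype n] [Fintype p]
    {C : Matrix m n K} {D : Matrix p n K}
    (h : LinearMap.ker D.mulVecLin ≤ LinearMap.ker C.mulVecLin) :
    ∃ E : Matrix m p K, C = E * D := by
  classical
  obtain ⟨e, he⟩ := LinearMap.exists_comp_eq_of_ker_le h
  refine ⟨LinearMap.toMatrix' e, toLin'.injective ?_⟩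
  rw [toLin'_mul, toLin'_toMatrix', toLin'_apply', toLin'_apply', he]

namespace Matrix

variable {n : Type*}

open scoped MatrixOrder in
theorem PosSemidef.pos_of_smul_sub {A B : Matrix n n ℂ} (hA : A.PosSemidef)
    (hB : B.PosSemidef) (hB0 : B ≠ 0) {l : ℝ} (hl : (l • A - B).PosSemidef) : 0 < l := by
  by_contra! hl0
  have hB_nonpos : B ≤ 0 := by
    have h := hl.add (hA.smul (neg_nonneg.mpr hl0))
    rwa [neg_smul, ← sub_eq_add_neg, sub_sub_cancel_left, ← zero_sub, ← le_iff] at h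
  exact hB0 (le_antisymm hB_nonpos hB.nonneg)

variable [Fintype n]

theorem IsHermitian.ker_le_ker_of_range_le {A B : Matrix n n ℂ} (hA : A.IsHermitian)
    (hB : B.PosSemidef) (h : LinearMap.range B.mulVecLin ≤ LinearMap.range A.mulVecLin) :
    LinearMap.ker A.mulVecLin ≤ LinearMap.ker B.mulVecLin := by
  intro x hx
  obtain ⟨y, hy⟩ := h ⟨x, rfl⟩
  simp only [LinearMap.mem_ker, mulVecLin_apply] at hx hy ⊢
  refine (hB.dotProduct_mulVec_zero_iff x).mp ?_
  -- `x⋆(B x) = x⋆(A y) = (A x)⋆ y = 0`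
  rw [← hy, dotProduct_mulVec, ← hA.eq, ← star_mulVec, hx, star_zero, zero_dotProduct]

section CStarAlgebra

open scoped Matrix.Norms.L2Operator MatrixOrder

variable [DecidableEq n]

theorem isClosed_setOf_posSemidef_s13 : IsClosed {A : Matrix n n ℂ | A.PosSemidef} := by
  simpa only [nonneg_iff_posSemidef] using CStarAlgebra.isClosed_nonneg (A := Matrix n n ℂ)

theorem PosSemidef.exists_smul_sub_posSemidef_of_ker_le {A B : Matrix n n ℂ}
    (hA : A.PosSemidef) (hB : B.PosSemidef)
    (h : LinearMap.ker A.mulVecLin ≤ LinearMap.ker B.mulVecLin) :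
    ∃ c : ℝ, (c • A - B).PosSemidef := by
  obtain ⟨D, rfl⟩ := CStarAlgebra.nonneg_iff_eq_star_mul_self.mp hA.nonneg
  obtain ⟨C, rfl⟩ := CStarAlgebra.nonneg_iff_eq_star_mul_self.mp hB.nonneg
  simp only [star_eq_conjTranspose, ker_mulVecLin_conjTranspose_mul_self] at h ⊢
  obtain ⟨E, rfl⟩ := exists_eq_mul_of_ker_le h
  refine ⟨‖star E * E‖, ?_⟩
  have := CStarAlgebra.star_left_conjugate_le_norm_smul (a := D) (b := star E * E)
  rw [← le_iff]
  simpa [star_eq_conjTranspose, conjTranspose_mul, Matrix.mul_assoc] using this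

end CStarAlgebra

theorem PosSemidef.exists_smul_sub_posSemidef_of_range_le [DecidableEq n] {A B : Matrix n n ℂ}
    (hA : A.PosSemidef) (hB : B.PosSemidef)
    (h : LinearMap.range B.mulVecLin ≤ LinearMap.range A.mulVecLin) :
    ∃ c : ℝ, (c • A - B).PosSemidef :=
  hA.exists_smul_sub_posSemidef_of_ker_le hB (hA.1.ker_le_ker_of_range_le hB h)

theorem PosSemidef.exists_lt_smul_sub_posSemidef_of_range_le [DecidableEq n]
    {A B : Matrix n n ℂ} (hA : A.PosSemidef) (hB : B.PosSemidef) (hB0 : B ≠ 0) {l : ℝ}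
    (hl : (l • A - B).PosSemidef)
    (h : LinearMap.range B.mulVecLin ≤ LinearMap.range (l • A - B).mulVecLin) :
    ∃ l' < l, (l' • A - B).PosSemidef := by
  have hl0 : 0 < l := hA.pos_of_smul_sub hB hB0 hl
  obtain ⟨μ, hμ⟩ := hl.exists_smul_sub_posSemidef_of_range_le hB h
  have hμ0 : 0 < μ := hl.pos_of_smul_sub hB hB0 hμ
  refine ⟨μ * l / (μ + 1), by rw [div_lt_iff₀ (by positivity)]; linarith, ?_⟩
  have hcomb : (μ * l / (μ + 1)) • A - B = (μ + 1)⁻¹ • (μ • (l • A - B) - B) := by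
    match_scalars
    · field_simp
    · field_simp; ring
  rw [hcomb]
  exact hμ.smul (by positivity)

end Matrix

theorem inf_psd_scaling_general {n : ℕ} (N₁ N₃ : Matrix (Fin n) (Fin n) ℂ)
    (h₁ : N₁.PosSemidef) (h₃ : N₃.PosSemidef) (h₃0 : N₃ ≠ 0)
    (hran : LinearMap.range N₃.mulVecLin ≤ LinearMap.range N₁.mulVecLin)
    (hli : LinearIndependent ℝ ![N₁, N₃]) :
    0 < sInf {l : ℝ | (l • N₁ - N₃).PosSemidef} ∧
    ((sInf {l : ℝ | (l • N₁ - N₃).PosSemidef}) • N₁ - N₃).PosSemidef ∧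
    (sInf {l : ℝ | (l • N₁ - N₃).PosSemidef}) • N₁ - N₃ ≠ 0 ∧
    ¬ (LinearMap.range N₃.mulVecLin ≤
        LinearMap.range ((sInf {l : ℝ | (l • N₁ - N₃).PosSemidef}) • N₁
          - N₃).mulVecLin) := by
  set S := {l : ℝ | (l • N₁ - N₃).PosSemidef}
  have hpos : ∀ l ∈ S, 0 < l := fun l hl => h₁.pos_of_smul_sub h₃ h₃0 hl
  have hbdd : BddBelow S := ⟨0, fun l hl => (hpos l hl).le⟩
  have hmem : sInf S ∈ S := (isClosed_setOf_posSemidef_s13.preimage (by fun_prop)).csInf_mem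
    (h₁.exists_smul_sub_posSemidef_of_range_le h₃ hran) hbdd
  have hne : sInf S • N₁ - N₃ ≠ 0 := fun h => by
    simpa using LinearIndependent.pair_iff.mp hli (sInf S) (-1)
      (by rwa [neg_one_smul, ← sub_eq_add_neg])
  refine ⟨hpos _ hmem, hmem, hne, fun hle => ?_⟩
  obtain ⟨l, hl, hlS⟩ := h₁.exists_lt_smul_sub_posSemidef_of_range_le h₃ h₃0 hmem hle
  exact (csInf_le hbdd hlS).not_gt hl

/-- A step in the proof of Lemma 4.4: for nonzero PSD matrices `N₁`, `N₃` with
`Ran(N₃) ⊆ Ran(N₁)` and `N₁, N₃` linearly independent over ℝ, the number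
`λ̃ = inf {λ : λN₁ − N₃ is PSD}` is finite and positive, `λ̃N₁ − N₃` is PSD
and nonzero, and `Ran(N₃)` is not contained in `Ran(λ̃N₁ − N₃)`. -/
theorem inf_psd_scaling {n : ℕ} (N₁ N₃ : Matrix (Fin n) (Fin n) ℂ)
    (h₁ : N₁.PosSemidef) (h₃ : N₃.PosSemidef) (h₁0 : N₁ ≠ 0) (h₃0 : N₃ ≠ 0)
    (hran : LinearMap.range N₃.mulVecLin ≤ LinearMap.range N₁.mulVecLin)
    (hli : LinearIndependent ℝ ![N₁, N₃]) :
    0 < sInf {l : ℝ | (l • N₁ - N₃).PosSemidef} ∧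
    ((sInf {l : ℝ | (l • N₁ - N₃).PosSemidef}) • N₁ - N₃).PosSemidef ∧
    (sInf {l : ℝ | (l • N₁ - N₃).PosSemidef}) • N₁ - N₃ ≠ 0 ∧
    ¬ (LinearMap.range N₃.mulVecLin ≤
        LinearMap.range ((sInf {l : ℝ | (l • N₁ - N₃).PosSemidef}) • N₁
          - N₃).mulVecLin) :=
  inf_psd_scaling_general N₁ N₃ h₁ h₃ h₃0 hran hli
end

section
/- Let {M_j} be a finite collection of Hermitian n×n matrices. If a nontrivial subspace V ⊆ ℂⁿ is minimal with respect to Span_ℝ{M_j}, then every real linear combination of the M_j that is positive semi-definite on V is zero on V (i.e., equals the zero matrix when restricted to V). -/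
open Matrix

/-- `Span_ℝ {M j}` is indefinite on `V`: no real linear combination of the
`M j` is positive definite on `V`. -/
def IndefiniteOn {n m : ℕ} (M : Fin m → Matrix (Fin n) (Fin n) ℂ)
    (V : Submodule ℂ (Fin n → ℂ)) : Prop :=
  ¬ ∃ a : Fin m → ℝ, PosDefOn (∑ j, a j • M j) V

namespace Cor42

variable {n : ℕ}

/-- The sesquilinear form attached to a matrix. -/
noncomputable def qf (A : Matrix (Fin n) (Fin n) ℂ) (v w : Fin n → ℂ) : ℂ :=
  star v ⬝ᵥ (A *ᵥ w)

lemma qf_conj {A : Matrix (Fin n) (Fin n) ℂ} (hA : A.IsHermitian) (v w : Fin n → ℂ) :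
    (starRingEnd ℂ) (qf A v w) = qf A w v := by
  have h1 : qf A v w = star (star (A *ᵥ w) ⬝ᵥ v) := star_dotProduct _ _
  rw [qf] at *
  rw [h1]
  have : (starRingEnd ℂ) (star (star (A *ᵥ w) ⬝ᵥ v)) = star (A *ᵥ w) ⬝ᵥ v := by
    simp
  rw [this, star_mulVec, ← dotProduct_mulVec, hA.eq]
  rfl

lemma qf_add_left (A : Matrix (Fin n) (Fin n) ℂ) (v v' w : Fin n → ℂ) :
    qf A (v + v') w = qf A v w + qf A v' w := by
  simp [qf, star_add, add_dotProduct]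

lemma qf_add_right (A : Matrix (Fin n) (Fin n) ℂ) (v w w' : Fin n → ℂ) :
    qf A v (w + w') = qf A v w + qf A v w' := by
  simp [qf, mulVec_add, dotProduct_add]

lemma qf_smul_left (A : Matrix (Fin n) (Fin n) ℂ) (c : ℂ) (v w : Fin n → ℂ) :
    qf A (c • v) w = (starRingEnd ℂ) c * qf A v w := by
  simp [qf, star_smul, smul_dotProduct, smul_eq_mul]

lemma qf_smul_right (A : Matrix (Fin n) (Fin n) ℂ) (c : ℂ) (v w : Fin n → ℂ) :
    qf A v (c • w) = c * qf A v w := by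
  simp [qf, mulVec_smul, dotProduct_smul, smul_eq_mul]

/-- If the quadratic form vanishes at `v ∈ V` and is PSD on `V`, the real part of
the pairing with any `w ∈ V` vanishes. -/
lemma qf_re_pair_eq_zero {A : Matrix (Fin n) (Fin n) ℂ} (hA : A.IsHermitian)
    {V : Submodule ℂ (Fin n → ℂ)} (hpsd : PosSemidefOn A V)
    {v w : Fin n → ℂ} (hv : v ∈ V) (hw : w ∈ V)
    (h0 : (qf A v v).re = 0) : (qf A v w).re = 0 := by
  by_contra hb
  set b := (qf A v w).re with hbdef
  set C := (qf A w w).re with hCdef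
  set t : ℝ := -(C + 1) / (2 * b) with htdef
  set u : Fin n → ℂ := (t : ℂ) • v + w with hudef
  have hu : u ∈ V := V.add_mem (V.smul_mem _ hv) hw
  have hexp : qf A u u = (t : ℂ) * (t : ℂ) * qf A v v + (t : ℂ) * qf A v w
      + (t : ℂ) * qf A w v + qf A w w := by
    simp only [hudef, qf_add_left, qf_add_right, qf_smul_left, qf_smul_right,
      Complex.conj_ofReal]
    ring
  have hwv : (qf A w v).re = b := by
    rw [← qf_conj hA v w, Complex.conj_re]
  have hre : (qf A u u).re = 2 * t * b + C := by
    rw [hexp]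
    simp only [Complex.add_re, ← Complex.ofReal_mul, Complex.re_ofReal_mul]
    rw [hwv, h0, ← hbdef, ← hCdef]
    ring
  have htb : 2 * t * b = -(C + 1) := by
    rw [htdef]
    field_simp
  have hge : 0 ≤ (qf A u u).re := hpsd u hu
  rw [hre, htb] at hge
  linarith

/-- If the quadratic form vanishes at `v ∈ V` and is PSD on `V`, the pairing with
any `w ∈ V` vanishes. -/
lemma qf_pair_eq_zero {A : Matrix (Fin n) (Fin n) ℂ} (hA : A.IsHermitian)
    {V : Submodule ℂ (Fin n → ℂ)} (hpsd : PosSemidefOn A V)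
    {v w : Fin n → ℂ} (hv : v ∈ V) (hw : w ∈ V)
    (h0 : (qf A v v).re = 0) : qf A v w = 0 := by
  have hre : (qf A v w).re = 0 := qf_re_pair_eq_zero hA hpsd hv hw h0
  have hvI : Complex.I • v ∈ V := V.smul_mem _ hv
  have h0I : (qf A (Complex.I • v) (Complex.I • v)).re = 0 := by
    rw [qf_smul_left, qf_smul_right]
    have : (starRingEnd ℂ) Complex.I * (Complex.I * qf A v v) = qf A v v := by
      rw [Complex.conj_I]; ring_nf; rw [Complex.I_sq]; ring
    rw [this, h0]
  have him := qf_re_pair_eq_zero hA hpsd hvI hw h0I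
  rw [qf_smul_left, Complex.conj_I] at him
  have him' : (qf A v w).im = 0 := by
    have : (-Complex.I * qf A v w).re = (qf A v w).im := by
      simp [Complex.mul_re]
    rw [this] at him; exact him
  exact Complex.ext hre him'

lemma qf_continuous (A : Matrix (Fin n) (Fin n) ℂ) :
    Continuous fun v : Fin n → ℂ => (qf A v v).re := by
  apply Complex.continuous_re.comp
  simp only [qf, dotProduct, mulVec]
  apply continuous_finset_sum
  intro i _
  apply Continuous.mul
  · exact Complex.continuous_conj.comp (continuous_apply i)
  · exact continuous_finset_sum _ fun j _ => continuous_const.mul (continuous_apply j)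

lemma qf_smul_real (A : Matrix (Fin n) (Fin n) ℂ) (r : ℝ) (v : Fin n → ℂ) :
    (qf A ((r : ℂ) • v) ((r : ℂ) • v)).re = r ^ 2 * (qf A v v).re := by
  rw [qf_smul_left, qf_smul_right, Complex.conj_ofReal, ← mul_assoc, ← Complex.ofReal_mul,
    Complex.re_ofReal_mul]
  ring

end Cor42

open Cor42 in
/-- Corollary 4.2: if `V` is minimal with respect to `Span_ℝ {M j}`, then every
real linear combination of the `M j` that is positive semi-definite on `V`
vanishes identically on `V`. -/
theorem minimal_psd_combination_vanishes {n m : ℕ}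
    (M : Fin m → Matrix (Fin n) (Fin n) ℂ) (hM : ∀ j, (M j).IsHermitian)
    (V : Submodule ℂ (Fin n → ℂ)) (hV : V ≠ ⊥)
    (hmin : IndefiniteOn M V ∧
      ∀ W : Submodule ℂ (Fin n → ℂ), W ≠ ⊥ → W < V → ¬ IndefiniteOn M W)
    (a : Fin m → ℝ) (hpsd : PosSemidefOn (∑ j, a j • M j) V) :
    ∀ v ∈ V, ∀ w ∈ V, star w ⬝ᵥ ((∑ j, a j • M j) *ᵥ v) = 0 := by
  obtain ⟨hind, hminW⟩ := hmin
  set A := ∑ j, a j • M j with hAdef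
  have hA : A.IsHermitian := by
    unfold Matrix.IsHermitian
    rw [hAdef, Matrix.conjTranspose_sum]
    exact Finset.sum_congr rfl fun j _ => by
      rw [Matrix.conjTranspose_smul, star_trivial, (hM j).eq]
  -- main claim: the quadratic form of A vanishes on V
  have hzero : ∀ v ∈ V, (qf A v v).re = 0 := by
    by_contra hN
    push_neg at hN
    -- the radical N of A on V
    set N : Submodule ℂ (Fin n → ℂ) :=
      { carrier := {v | v ∈ V ∧ (qf A v v).re = 0}
        zero_mem' := by
          refine ⟨V.zero_mem, ?_⟩
          simp [qf]
        add_mem' := by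
          rintro v w ⟨hvV, hv0⟩ ⟨hwV, hw0⟩
          refine ⟨V.add_mem hvV hwV, ?_⟩
          rw [qf_add_left, qf_add_right, qf_add_right]
          have h1 : qf A v w = 0 := qf_pair_eq_zero hA hpsd hvV hwV hv0
          have h2 : qf A w v = 0 := qf_pair_eq_zero hA hpsd hwV hvV hw0
          simp [h1, h2, hv0, hw0, Complex.add_re]
        smul_mem' := by
          rintro c v ⟨hvV, hv0⟩
          refine ⟨V.smul_mem c hvV, ?_⟩
          rw [qf_smul_left, qf_smul_right, ← mul_assoc, Complex.conj_mul',
            ← Complex.ofReal_pow, Complex.re_ofReal_mul, hv0, mul_zero] } with hNdef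
    have hNmem : ∀ v, v ∈ N ↔ v ∈ V ∧ (qf A v v).re = 0 := fun v => Iff.rfl
    have hNleV : N ≤ V := fun v hv => ((hNmem v).mp hv).1
    have hNneV : N ≠ V := by
      intro h
      obtain ⟨v, hvV, hv0⟩ := hN
      exact hv0 ((hNmem v).mp (h ▸ hvV)).2
    have hNltV : N < V := lt_of_le_of_ne hNleV hNneV
    -- positivity of A off the radical
    have hpos : ∀ v ∈ V, v ∉ N → 0 < (qf A v v).re := by
      intro v hvV hvN
      rcases lt_or_eq_of_le (hpsd v hvV) with h | h
      · exact h
      · exact absurd ((hNmem v).mpr ⟨hvV, h.symm⟩) hvN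
    by_cases hNbot : N = ⊥
    · -- A itself is positive definite on V: contradiction with indefiniteness
      exact hind ⟨a, fun v hvV hv0 => hpos v hvV (by rw [hNbot]; simpa using hv0)⟩
    · -- N is a nontrivial proper subspace: get a PD combination B on N
      obtain ⟨b, hB⟩ := not_not.mp (hminW N hNbot hNltV)
      set B := ∑ j, b j • M j with hBdef
      -- compactness argument on the unit sphere of V
      set f : (Fin n → ℂ) → ℝ := fun v => (qf A v v).re with hfdef
      set g : (Fin n → ℂ) → ℝ := fun v => (qf B v v).re with hgdef
      have hf_cont : Continuous f := qf_continuous A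
      have hg_cont : Continuous g := qf_continuous B
      set S : Set (Fin n → ℂ) := Metric.sphere 0 1 ∩ (V : Set (Fin n → ℂ)) with hSdef
      have hVclosed : IsClosed (V : Set (Fin n → ℂ)) := Submodule.closed_of_finiteDimensional V
      have hScomp : IsCompact S := (isCompact_sphere 0 1).inter_right hVclosed
      -- S is nonempty
      obtain ⟨v0, hv0V, hv0ne⟩ := Submodule.exists_mem_ne_zero_of_ne_bot hV
      have hv0norm : ‖v0‖ ≠ 0 := norm_ne_zero_iff.mpr hv0ne
      have hSne : S.Nonempty := by
        refine ⟨((‖v0‖⁻¹ : ℝ) : ℂ) • v0, ?_, V.smul_mem _ hv0V⟩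
        simp only [Metric.mem_sphere, dist_zero_right, norm_smul]
        rw [Complex.norm_real, Real.norm_eq_abs, abs_of_nonneg (by positivity)]
        field_simp
      -- key claim: there is t > 0 with f + t * g > 0 on S
      have hkey : ∃ t : ℝ, 0 < t ∧ ∀ u ∈ S, 0 < f u + t * g u := by
        set K : Set (Fin n → ℂ) := S ∩ {v | g v ≤ 0} with hKdef
        have hKcomp : IsCompact K := hScomp.inter_right (isClosed_le hg_cont continuous_const)
        by_cases hKne : K.Nonempty
        · obtain ⟨x, hxK, hxmin⟩ := hKcomp.exists_isMinOn hKne hf_cont.continuousOn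
          obtain ⟨y, hyS, hymin⟩ := hScomp.exists_isMinOn hSne hg_cont.continuousOn
          set α := f x with hα
          set β := g y with hβ
          have hxS : x ∈ S := hxK.1
          have hxV : x ∈ V := hxS.2
          have hxne : x ≠ 0 := by
            intro h
            have := hxS.1
            rw [h] at this
            simp at this
          have hαpos : 0 < α := by
            rcases lt_or_eq_of_le (hpsd x hxV) with h | h
            · exact h
            · exfalso
              have hxN : x ∈ N := (hNmem x).mpr ⟨hxV, h.symm⟩
              have hgx : 0 < g x := hB x hxN hxne
              have hgx' : g x ≤ 0 := hxK.2
              linarith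
          refine ⟨α / (2 * (1 + |β|)), by positivity, ?_⟩
          intro u huS
          by_cases hgu : g u ≤ 0
          · have huK : u ∈ K := ⟨huS, hgu⟩
            have hfu : α ≤ f u := hxmin huK
            have hb1 : -|β| ≤ g u := le_trans (neg_abs_le β) (hymin huS)
            set τ : ℝ := α / (2 * (1 + |β|)) with hτdef
            have hτpos : 0 < τ := by positivity
            have hτβ : τ * |β| ≤ α / 2 := by
              rw [hτdef, div_mul_eq_mul_div, div_le_div_iff₀ (by positivity) (by norm_num)]
              nlinarith [abs_nonneg β, hαpos.le]
            have hmul : τ * (-|β|) ≤ τ * g u := mul_le_mul_of_nonneg_left hb1 hτpos.le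
            have hring : τ * (-|β|) = -(τ * |β|) := by ring
            linarith
          · push_neg at hgu
            have hfu : 0 ≤ f u := hpsd u huS.2
            have : 0 < α / (2 * (1 + |β|)) * g u := by positivity
            linarith
        · -- K empty : g > 0 on all of S
          refine ⟨1, one_pos, ?_⟩
          intro u huS
          have hgu : 0 < g u := by
            by_contra h
            push_neg at h
            exact hKne ⟨u, huS, h⟩
          have hfu : 0 ≤ f u := hpsd u huS.2
          linarith
      obtain ⟨t, htpos, ht⟩ := hkey
      -- the combination a + t • b is positive definite on V : contradiction
      apply hind
      refine ⟨fun j => a j + t * b j, ?_⟩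
      have hsum : (∑ j, (a j + t * b j) • M j) = A + t • B := by
        rw [hAdef, hBdef, Finset.smul_sum, ← Finset.sum_add_distrib]
        exact Finset.sum_congr rfl fun j _ => by rw [add_smul, mul_smul]
      intro v hvV hvne
      have hform : (star v ⬝ᵥ ((∑ j, (a j + t * b j) • M j) *ᵥ v)).re = f v + t * g v := by
        rw [hsum]
        show (qf (A + t • B) v v).re = _
        rw [qf, Matrix.add_mulVec, dotProduct_add]
        have h2 : star v ⬝ᵥ ((t • B) *ᵥ v) = t • (star v ⬝ᵥ (B *ᵥ v)) := by
          rw [Matrix.smul_mulVec, dotProduct_smul]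
        rw [h2, Complex.add_re, Complex.smul_re, smul_eq_mul]
        rfl
      rw [hform]
      -- scale v to the sphere
      have hvnorm : ‖v‖ ≠ 0 := norm_ne_zero_iff.mpr hvne
      set u : Fin n → ℂ := ((‖v‖⁻¹ : ℝ) : ℂ) • v with hudef
      have huS : u ∈ S := by
        refine ⟨?_, V.smul_mem _ hvV⟩
        simp only [Metric.mem_sphere, dist_zero_right, norm_smul, hudef]
        rw [Complex.norm_real, Real.norm_eq_abs, abs_of_nonneg (by positivity)]
        field_simp
      have hvu : v = ((‖v‖ : ℝ) : ℂ) • u := by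
        rw [hudef, smul_smul, ← Complex.ofReal_mul, mul_inv_cancel₀ hvnorm]
        simp
      have hfv : f v = ‖v‖ ^ 2 * f u := by
        rw [hfdef]
        conv_lhs => rw [hvu]
        exact qf_smul_real A ‖v‖ u
      have hgv : g v = ‖v‖ ^ 2 * g u := by
        rw [hgdef]
        conv_lhs => rw [hvu]
        exact qf_smul_real B ‖v‖ u
      rw [hfv, hgv]
      have := ht u huS
      have hn2 : 0 < ‖v‖ ^ 2 := by positivity
      nlinarith
  -- conclude via the pairing lemma
  intro v hvV w hwV
  exact qf_pair_eq_zero hA hpsd hwV hvV (hzero w hwV)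
end
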